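/- Let C be a finite set of commitments assigned to identities by f : C → I with all fibers of size at most ℓ (ℓ ≥ 1) and |C| = k, where each identity locks a bond D > 0. Let U ⊆ C be a subset of u commitments that are left unopened, each incurring a slashing penalty of at least δ · D with δ > 0. Then the adversary's total cost (locked capital plus slashing) is at least ⌈k/ℓ⌉ · D + u · δ · D. -/
import Mathlib

/-- **Bounded Stuffing Cost with non-opening slashing.**
Commitments `C` (with `|C| = k`) are assigned to identities by `f`, with at most `ℓ`
commitments per identity; each identity locks a bond `D > 0`. A subset `U ⊆ C` of
`u` commitments is left unopened, and each unopened commitment `c ∈ U` incurs a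
slashing penalty `penalty c ≥ δ · D` with `δ > 0`. Then the total cost — locked
capital `|f(C)| · D` plus total slashing `∑ c ∈ U, penalty c` — is at least
`⌈k/ℓ⌉ · D + u · δ · D`. -/
theorem stuffing_cost_with_slashing {α ι : Type*} [DecidableEq ι]
    (C : Finset α) (f : α → ι) (ℓ k : ℕ) (hℓ : 1 ≤ ℓ)
    (hfiber : ∀ i : ι, (C.filter (fun c => f c = i)).card ≤ ℓ)
    (hk : C.card = k)
    (D : ℝ) (hD : 0 < D)
    (U : Finset α) (hUC : U ⊆ C) (u : ℕ) (hu : U.card = u)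
    (δ : ℝ) (hδ : 0 < δ)
    (penalty : α → ℝ) (hpen : ∀ c ∈ U, δ * D ≤ penalty c) :
    ((k ⌈/⌉ ℓ : ℕ) : ℝ) * D + (u : ℝ) * δ * D ≤
      ((C.image f).card : ℝ) * D + ∑ c ∈ U, penalty c := by
  have h1 : k ⌈/⌉ ℓ ≤ (C.image f).card := by
    rw [ceilDiv_le_iff_le_mul hℓ]
    calc k = C.card := hk.symm
    _ ≤ ℓ * (C.image f).card := Finset.card_le_mul_card_image C ℓ (fun i _ => hfiber i)
  have h2 : (u : ℝ) * δ * D ≤ ∑ c ∈ U, penalty c := by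
    calc (u : ℝ) * δ * D = ∑ _c ∈ U, δ * D := by
          rw [Finset.sum_const, ← hu, nsmul_eq_mul, mul_assoc]
    _ ≤ ∑ c ∈ U, penalty c := Finset.sum_le_sum hpen
  have : ((k ⌈/⌉ ℓ : ℕ) : ℝ) * D ≤ ((C.image f).card : ℝ) * D := by
    apply mul_le_mul_of_nonneg_right (by exact_mod_cast h1) hD.le
  linarith
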